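/- Let Y = ΦX + E, where Φ ∈ ℂ^{M×N} has ΦΦ* invertible, X ∈ ℂ^{N×L} is s row-sparse with S = supp(X), and E ∈ ℂ^{M×L}. Let W̃ ∈ ℂ^{N×L} be s̃ row-sparse and set X̃ = W̃ + Φ*(ΦΦ*)⁻¹(Y − ΦW̃). Suppose X̃ = QR where Q ∈ ℂ^{N×L} has orthonormal columns and R ∈ ℂ^{L×L} is invertible with σ_max(R) ≤ α·σ_min(R) for some α ≥ 1. Let T ⊆ {1,…,N} with |T| = t ≥ s be such that ‖Q_{i·}‖₂ ≥ ‖Q_{j·}‖₂ for all i ∈ T, j ∉ T. Let γ ≥ 0 be a preconditioned restricted isometry constant of order s + s̃ + t for Φ, and θ ≥ 0 an upper restricted isometry constant of order t + s for (ΦΦ*)⁻¹Φ. Then ‖X_(T^c)‖_F ≤ √2 · α · (γ·‖X − W̃‖_F + √(1+θ)·‖E‖_F). -/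

import Mathlib

open Matrix BigOperators

/-- Frobenius norm of a complex matrix. -/
noncomputable def frobNorm {m n : Type*} [Fintype m] [Fintype n] (A : Matrix m n ℂ) : ℝ :=
  Real.sqrt (∑ i, ∑ j, ‖A i j‖ ^ 2)

open scoped Classical in
/-- The row support of a matrix: indices of its nonzero rows. -/
noncomputable def rowSupp {N L : ℕ} (X : Matrix (Fin N) (Fin L) ℂ) : Finset (Fin N) :=
  Finset.univ.filter (fun i => X i ≠ 0)

/-- `X_(T)`: the matrix obtained from `X` by zeroing every row with index outside `T`. -/
def rowRestrict {N L : ℕ} (T : Finset (Fin N)) (X : Matrix (Fin N) (Fin L) ℂ) :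
    Matrix (Fin N) (Fin L) ℂ :=
  fun i j => if i ∈ T then X i j else 0

/-- Euclidean norm of a complex vector. -/
noncomputable def vecNorm {ι : Type*} [Fintype ι] (v : ι → ℂ) : ℝ :=
  Real.sqrt (∑ i, ‖v i‖ ^ 2)

/-- `Φ_T`: the submatrix of columns of `Φ` indexed by `T`. -/
def colSub {M N : ℕ} (Φ : Matrix (Fin M) (Fin N) ℂ) (T : Finset (Fin N)) :
    Matrix (Fin M) {x // x ∈ T} ℂ :=
  fun i j => Φ i j.val

/-- `X_{(T)}`: the submatrix of rows of `X` indexed by `T`. -/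
def rowSub {N L : ℕ} (T : Finset (Fin N)) (X : Matrix (Fin N) (Fin L) ℂ) :
    Matrix {x // x ∈ T} (Fin L) ℂ :=
  fun i j => X i.val j

/-- The set of values `‖R v‖` over unit vectors `v` (the "singular value range"). -/
noncomputable def sigmaSet {L : ℕ} (R : Matrix (Fin L) (Fin L) ℂ) : Set ℝ :=
  {c | ∃ v : Fin L → ℂ, vecNorm v = 1 ∧ c = vecNorm (R.mulVec v)}

/-- The largest singular value of `R`. -/
noncomputable def sigmaMax {L : ℕ} (R : Matrix (Fin L) (Fin L) ℂ) : ℝ :=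
  sSup (sigmaSet R)

/-- The smallest singular value of `R` (for invertible `R`). -/
noncomputable def sigmaMin {L : ℕ} (R : Matrix (Fin L) (Fin L) ℂ) : ℝ :=
  sInf (sigmaSet R)

/-- Spectral (operator) norm of a square complex matrix. -/
noncomputable def specNorm {ι : Type*} [Fintype ι] (A : Matrix ι ι ℂ) : ℝ :=
  sSup {c | ∃ v : ι → ℂ, vecNorm v = 1 ∧ c = vecNorm (A.mulVec v)}

/-- `δ` is a restricted isometry constant (RIC) of order `t` for `A`, relative to matrices with
`L` columns: `(1-δ)‖Z‖_F² ≤ ‖AZ‖_F² ≤ (1+δ)‖Z‖_F²` for every `t` row-sparse `Z`. -/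
def IsRIC {M N : ℕ} (L : ℕ) (A : Matrix (Fin M) (Fin N) ℂ) (t : ℕ) (δ : ℝ) : Prop :=
  ∀ Z : Matrix (Fin N) (Fin L) ℂ, (rowSupp Z).card ≤ t →
    (1 - δ) * frobNorm Z ^ 2 ≤ frobNorm (A * Z) ^ 2 ∧
      frobNorm (A * Z) ^ 2 ≤ (1 + δ) * frobNorm Z ^ 2

/-- `γ` is a preconditioned restricted isometry constant (P-RIC) of order `t` for `Φ`:
`(1-γ)‖Z‖_F² ≤ Re tr((ΦZ)* (ΦΦ*)⁻¹ (ΦZ))` for every `t` row-sparse `Z`. -/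
def IsPRIC {M N : ℕ} (L : ℕ) (Φ : Matrix (Fin M) (Fin N) ℂ) (t : ℕ) (γ : ℝ) : Prop :=
  ∀ Z : Matrix (Fin N) (Fin L) ℂ, (rowSupp Z).card ≤ t →
    (1 - γ) * frobNorm Z ^ 2 ≤ (Matrix.trace ((Φ * Z)ᴴ * ((Φ * Φᴴ)⁻¹ * (Φ * Z)))).re

/-- `θ` is an upper restricted isometry constant of order `t` for `A`:
`‖AZ‖_F² ≤ (1+θ)‖Z‖_F²` for every `t` row-sparse `Z`. -/
def IsUpperRIC {M N : ℕ} (L : ℕ) (A : Matrix (Fin M) (Fin N) ℂ) (t : ℕ) (θ : ℝ) : Prop :=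
  ∀ Z : Matrix (Fin N) (Fin L) ℂ, (rowSupp Z).card ≤ t →
    frobNorm (A * Z) ^ 2 ≤ (1 + θ) * frobNorm Z ^ 2

/-- The least-squares feedback of `X` on the index set `T`:
rows outside `T` are zero and on `T` it equals
`X_{(T)} + (Φ_T* Φ_T)⁻¹ Φ_T* Φ_{T^c} X_{(T^c)}`. -/
noncomputable def feedback {M N L : ℕ} (Φ : Matrix (Fin M) (Fin N) ℂ) (T : Finset (Fin N))
    (X : Matrix (Fin N) (Fin L) ℂ) : Matrix (Fin N) (Fin L) ℂ :=
  fun i j =>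
    if h : i ∈ T then
      (rowSub T X +
        ((colSub Φ T)ᴴ * colSub Φ T)⁻¹ * (colSub Φ T)ᴴ *
          (colSub Φ Tᶜ * rowSub Tᶜ X)) ⟨i, h⟩ j
    else 0

/-!
Write `X̃ - X = Φ*(ΦΦ*)⁻¹E - G(X - W̃)`, where `G = I - Φ*(ΦΦ*)⁻¹Φ` is the orthogonal projection
onto `ker Φ`. Let `K = S \ T` be the missed support and pick `U ⊆ T \ S` with `|U| = |K|`. The rows
of `Q` on `T` dominate those outside, and `σ_max(R) ≤ α σ_min(R)`, so `‖X̃_K‖ ≤ α ‖X̃_U‖`; as `X`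
vanishes on `U`, this gives `‖X_K‖ ≤ α (‖D_U‖ + ‖D_K‖) ≤ √2 α ‖Z‖` for `D = X̃ - X` and
`Z = D_(U ∪ K)`. Finally `‖Z‖² = Re tr(Z* D)`: the noise part is bounded by Cauchy–Schwarz and the
upper RIC, and the kernel part through `Re tr(Z* G V) = Re tr((GZ)* (GV))` with `V = X - W̃`,
since the P-RIC says precisely that `‖G A‖² ≤ γ ‖A‖²` for sparse `A`.
-/

section Frobenius

variable {m n k : Type*} [Fintype m] [Fintype n]

noncomputable def frobVec (A : Matrix m n ℂ) : EuclideanSpace ℂ (m × n) :=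
  WithLp.toLp 2 (Function.uncurry A)

lemma frobNorm_eq_norm_frobVec (A : Matrix m n ℂ) : frobNorm A = ‖frobVec A‖ := by
  rw [EuclideanSpace.norm_eq, frobNorm, Fintype.sum_prod_type]
  rfl

lemma inner_frobVec (A B : Matrix m n ℂ) :
    inner ℂ (frobVec A) (frobVec B) = trace (Aᴴ * B) := by
  simp only [frobVec, PiLp.inner_apply, RCLike.inner_apply, trace, diag, mul_apply,
    conjTranspose_apply, Fintype.sum_prod_type]
  rw [Finset.sum_comm]
  exact Finset.sum_congr rfl fun _ _ => Finset.sum_congr rfl fun _ _ => mul_comm _ _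

lemma frobNorm_nonneg (A : Matrix m n ℂ) : 0 ≤ frobNorm A := Real.sqrt_nonneg _

lemma frobNorm_sub_le (A B : Matrix m n ℂ) : frobNorm (A - B) ≤ frobNorm A + frobNorm B := by
  simp only [frobNorm_eq_norm_frobVec]
  exact norm_sub_le (frobVec A) (frobVec B)

lemma frobNorm_sq_eq_re_trace (A : Matrix m n ℂ) : frobNorm A ^ 2 = (trace (Aᴴ * A)).re := by
  rw [frobNorm_eq_norm_frobVec, ← inner_frobVec, ← inner_self_eq_norm_sq (𝕜 := ℂ)]
  rfl

lemma abs_re_trace_le_frobNorm_mul (A B : Matrix m n ℂ) :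
    |(trace (Aᴴ * B)).re| ≤ frobNorm A * frobNorm B := by
  rw [← inner_frobVec, frobNorm_eq_norm_frobVec, frobNorm_eq_norm_frobVec]
  exact (RCLike.abs_re_le_norm _).trans (norm_inner_le_norm (𝕜 := ℂ) _ _)

lemma vecNorm_eq_norm (v : n → ℂ) : vecNorm v = ‖(WithLp.toLp 2 v : EuclideanSpace ℂ n)‖ := by
  rw [EuclideanSpace.norm_eq]
  rfl

lemma vecNorm_nonneg (v : n → ℂ) : 0 ≤ vecNorm v := Real.sqrt_nonneg _

lemma vecNorm_star (v : n → ℂ) : vecNorm (star v) = vecNorm v := by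
  simp only [vecNorm, Pi.star_apply, norm_star]

lemma frobNorm_sq_eq_sum_vecNorm_sq (A : Matrix m n ℂ) :
    frobNorm A ^ 2 = ∑ i, vecNorm (A i) ^ 2 := by
  simp only [frobNorm, vecNorm]
  rw [Real.sq_sqrt (by positivity)]
  exact Finset.sum_congr rfl fun i _ => (Real.sq_sqrt (by positivity)).symm

open scoped Matrix.Norms.L2Operator in
lemma frobNorm_mul_le_l2_opNorm_mul [Fintype k] [DecidableEq n] [DecidableEq k]
    (A : Matrix m n ℂ) (B : Matrix n k ℂ) : frobNorm (A * B) ≤ ‖B‖ * frobNorm A := by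
  have hrow (i : m) : vecNorm ((A * B) i) ≤ ‖B‖ * vecNorm (A i) := by
    have h := l2_opNorm_mulVec Bᴴ (WithLp.toLp 2 (star (A i)))
    rw [l2_opNorm_conjTranspose, ← star_vecMul] at h
    rw [← vecNorm_star, ← vecNorm_star (A i), vecNorm_eq_norm, vecNorm_eq_norm]
    exact h
  rw [← pow_le_pow_iff_left₀ (frobNorm_nonneg _)
      (mul_nonneg (norm_nonneg _) (frobNorm_nonneg _)) two_ne_zero, mul_pow,
    frobNorm_sq_eq_sum_vecNorm_sq, frobNorm_sq_eq_sum_vecNorm_sq, Finset.mul_sum]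
  gcongr with i
  rw [← mul_pow]
  exact pow_le_pow_left₀ (vecNorm_nonneg _) (hrow i) 2

end Frobenius

section SingularValues

open scoped Matrix.Norms.L2Operator

variable {L : ℕ}

lemma sigmaSet_eq_image_sphere (R : Matrix (Fin L) (Fin L) ℂ) :
    sigmaSet R = (fun x => ‖toEuclideanCLM (𝕜 := ℂ) R x‖) '' Metric.sphere 0 1 := by
  ext c
  constructor
  · rintro ⟨v, hv, rfl⟩
    refine ⟨WithLp.toLp 2 v, ?_, ?_⟩
    · rwa [mem_sphere_zero_iff_norm, ← vecNorm_eq_norm]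
    · simp [vecNorm_eq_norm]
  · rintro ⟨x, hx, rfl⟩
    refine ⟨x.ofLp, ?_, ?_⟩
    · rwa [vecNorm_eq_norm, ← mem_sphere_zero_iff_norm]
    · rw [vecNorm_eq_norm]
      rfl

lemma sigmaMax_eq_l2_opNorm (R : Matrix (Fin L) (Fin L) ℂ) : sigmaMax R = ‖R‖ := by
  rw [sigmaMax, sigmaSet_eq_image_sphere, ContinuousLinearMap.sSup_sphere_eq_norm]
  rfl

lemma sigmaMin_nonneg (R : Matrix (Fin L) (Fin L) ℂ) : 0 ≤ sigmaMin R := by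
  refine Real.sInf_nonneg fun c hc => ?_
  rw [sigmaSet_eq_image_sphere] at hc
  obtain ⟨x, -, rfl⟩ := hc
  exact norm_nonneg _

lemma sigmaMin_mul_norm_le (R : Matrix (Fin L) (Fin L) ℂ) (x : EuclideanSpace ℂ (Fin L)) :
    sigmaMin R * ‖x‖ ≤ ‖toEuclideanCLM (𝕜 := ℂ) R x‖ := by
  rcases eq_or_ne x 0 with rfl | hx
  · simp
  have hpos : 0 < ‖x‖ := norm_pos_iff.mpr hx
  have hmem : ‖toEuclideanCLM (𝕜 := ℂ) R ((‖x‖⁻¹ : ℂ) • x)‖ ∈ sigmaSet R := by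
    rw [sigmaSet_eq_image_sphere]
    refine ⟨_, ?_, rfl⟩
    rw [mem_sphere_zero_iff_norm, norm_smul, norm_inv, Complex.norm_real, Real.norm_eq_abs,
      abs_of_pos hpos, inv_mul_cancel₀ hpos.ne']
  have h := csInf_le ⟨0, fun c hc => ?_⟩ hmem
  · rwa [map_smul, norm_smul, norm_inv, Complex.norm_real, Real.norm_eq_abs, abs_of_pos hpos,
      ← div_eq_inv_mul, le_div_iff₀ hpos] at h
  · rw [sigmaSet_eq_image_sphere] at hc
    obtain ⟨y, -, rfl⟩ := hc
    exact norm_nonneg _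

lemma sigmaMin_mul_l2_opNorm_inv_le_one {R : Matrix (Fin L) (Fin L) ℂ} (hR : IsUnit R) :
    sigmaMin R * ‖R⁻¹‖ ≤ 1 := by
  have hRR : R * R⁻¹ = 1 := mul_nonsing_inv R ((isUnit_iff_isUnit_det R).mp hR)
  have h : ‖(sigmaMin R : ℂ) • toEuclideanCLM (𝕜 := ℂ) R⁻¹‖ ≤ 1 := by
    refine ContinuousLinearMap.opNorm_le_bound _ zero_le_one fun x => ?_
    have := sigmaMin_mul_norm_le R (toEuclideanCLM (𝕜 := ℂ) R⁻¹ x)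
    rw [← mul_apply_eq_comp, ← map_mul, hRR, map_one, one_apply_eq_self] at this
    rwa [_root_.smul_apply, norm_smul, Complex.norm_real, Real.norm_eq_abs,
      abs_of_nonneg (sigmaMin_nonneg R), one_mul]
  rwa [norm_smul, Complex.norm_real, Real.norm_eq_abs, abs_of_nonneg (sigmaMin_nonneg R),
    l2_opNorm_toEuclideanCLM] at h

lemma frobNorm_mul_le_sigmaMax_mul {m : Type*} [Fintype m] (A : Matrix m (Fin L) ℂ)
    (R : Matrix (Fin L) (Fin L) ℂ) : frobNorm (A * R) ≤ sigmaMax R * frobNorm A := by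
  rw [sigmaMax_eq_l2_opNorm]
  exact frobNorm_mul_le_l2_opNorm_mul A R

lemma sigmaMin_mul_frobNorm_le {m : Type*} [Fintype m] (A : Matrix m (Fin L) ℂ)
    {R : Matrix (Fin L) (Fin L) ℂ} (hR : IsUnit R) : sigmaMin R * frobNorm A ≤ frobNorm (A * R) :=
  -- Right multiplication acts on rows through `Rᴴ`; passing through `‖R⁻¹‖` avoids comparing
  -- `sigmaMin R` with `sigmaMin Rᴴ`.
  calc sigmaMin R * frobNorm A = sigmaMin R * frobNorm (A * R * R⁻¹) := by
        rw [Matrix.mul_assoc, mul_nonsing_inv R ((isUnit_iff_isUnit_det R).mp hR), Matrix.mul_one]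
    _ ≤ sigmaMin R * (‖R⁻¹‖ * frobNorm (A * R)) :=
        mul_le_mul_of_nonneg_left (frobNorm_mul_le_l2_opNorm_mul _ _) (sigmaMin_nonneg R)
    _ = sigmaMin R * ‖R⁻¹‖ * frobNorm (A * R) := by ring
    _ ≤ frobNorm (A * R) :=
        mul_le_of_le_one_left (frobNorm_nonneg _) (sigmaMin_mul_l2_opNorm_inv_le_one hR)

end SingularValues

lemma Finset.sum_le_sum_of_card_eq_of_forall_le {ι β : Type*} [AddCommMonoid β] [PartialOrder β]
    [IsOrderedAddMonoid β] {K T : Finset ι} (f : ι → β)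
    (hcard : K.card = T.card) (hle : ∀ i ∈ T, ∀ j ∈ K, f j ≤ f i) :
    ∑ j ∈ K, f j ≤ ∑ i ∈ T, f i := by
  classical
  let e := Finset.equivOfCardEq hcard
  calc ∑ j ∈ K, f j = ∑ j : K, f j := (Finset.sum_coe_sort K f).symm
    _ ≤ ∑ j : K, f (e j) := Finset.sum_le_sum fun j _ => hle _ (e j).2 _ j.2
    _ = ∑ i : T, f i := e.sum_comp (fun i => f i)
    _ = ∑ i ∈ T, f i := Finset.sum_coe_sort T f

section RowRestrict

variable {N L : ℕ}

lemma mem_rowSupp {X : Matrix (Fin N) (Fin L) ℂ} {i : Fin N} : i ∈ rowSupp X ↔ X i ≠ 0 := by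
  classical simp [rowSupp]

lemma rowSupp_sub_subset (A B : Matrix (Fin N) (Fin L) ℂ) :
    rowSupp (A - B) ⊆ rowSupp A ∪ rowSupp B := by
  intro i hi
  contrapose! hi
  simp only [Finset.mem_union, not_or, mem_rowSupp, not_not] at hi
  rw [mem_rowSupp, not_not]
  exact show A i - B i = 0 by rw [hi.1, hi.2, sub_zero]

lemma rowSupp_rowRestrict_subset (T : Finset (Fin N)) (A : Matrix (Fin N) (Fin L) ℂ) :
    rowSupp (rowRestrict T A) ⊆ T := by
  intro i hi
  contrapose! hi
  rw [mem_rowSupp, not_not]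
  ext j
  simp [rowRestrict, hi]

lemma rowRestrict_sub (T : Finset (Fin N)) (A B : Matrix (Fin N) (Fin L) ℂ) :
    rowRestrict T (A - B) = rowRestrict T A - rowRestrict T B := by
  ext i j
  by_cases hi : i ∈ T <;> simp [rowRestrict, hi]

lemma rowRestrict_mul {L' : ℕ} (T : Finset (Fin N))
    (A : Matrix (Fin N) (Fin L) ℂ) (B : Matrix (Fin L) (Fin L') ℂ) :
    rowRestrict T (A * B) = rowRestrict T A * B := by
  ext i j
  by_cases hi : i ∈ T <;> simp [rowRestrict, hi, mul_apply]

lemma rowRestrict_rowSupp_inter (T : Finset (Fin N)) (X : Matrix (Fin N) (Fin L) ℂ) :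
    rowRestrict (rowSupp X ∩ T) X = rowRestrict T X := by
  ext i j
  by_cases hi : X i = 0
  · simp [rowRestrict, hi]
  · simp [rowRestrict, mem_rowSupp, hi]

lemma rowRestrict_eq_zero_of_disjoint {T : Finset (Fin N)} {X : Matrix (Fin N) (Fin L) ℂ}
    (h : Disjoint T (rowSupp X)) : rowRestrict T X = 0 := by
  rw [← rowRestrict_rowSupp_inter, Finset.disjoint_iff_inter_eq_empty.mp h.symm]
  ext i j
  simp [rowRestrict]

lemma frobNorm_sq_rowRestrict (T : Finset (Fin N)) (A : Matrix (Fin N) (Fin L) ℂ) :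
    frobNorm (rowRestrict T A) ^ 2 = ∑ i ∈ T, vecNorm (A i) ^ 2 := by
  rw [frobNorm_sq_eq_sum_vecNorm_sq, ← Finset.sum_subset (Finset.subset_univ T)]
  · refine Finset.sum_congr rfl fun i hi => ?_
    congr 2
    ext j
    simp [rowRestrict, hi]
  · intro i _ hi
    simp [rowRestrict, hi, vecNorm]

lemma frobNorm_rowRestrict_add_le_sqrt_two_mul {T U : Finset (Fin N)} (h : Disjoint T U)
    (A : Matrix (Fin N) (Fin L) ℂ) :
    frobNorm (rowRestrict T A) + frobNorm (rowRestrict U A) ≤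
      Real.sqrt 2 * frobNorm (rowRestrict (T ∪ U) A) := by
  have hsq : frobNorm (rowRestrict (T ∪ U) A) ^ 2 =
      frobNorm (rowRestrict T A) ^ 2 + frobNorm (rowRestrict U A) ^ 2 := by
    simp only [frobNorm_sq_rowRestrict, Finset.sum_union h]
  rw [← Real.sqrt_sq (frobNorm_nonneg (rowRestrict (T ∪ U) A)), hsq, ← Real.sqrt_mul zero_le_two]
  refine Real.le_sqrt_of_sq_le ?_
  nlinarith [sq_nonneg (frobNorm (rowRestrict T A) - frobNorm (rowRestrict U A))]

lemma conjTranspose_rowRestrict_mul_self (T : Finset (Fin N)) (A : Matrix (Fin N) (Fin L) ℂ) :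
    (rowRestrict T A)ᴴ * A = (rowRestrict T A)ᴴ * rowRestrict T A := by
  ext j j'
  simp only [mul_apply]
  refine Finset.sum_congr rfl fun i _ => ?_
  by_cases hi : i ∈ T <;> simp [rowRestrict, hi]

lemma frobNorm_rowRestrict_le_of_forall_le {Q : Matrix (Fin N) (Fin L) ℂ} {T K U : Finset (Fin N)}
    (hQ : ∀ i ∈ T, ∀ j ∉ T, vecNorm (Q j) ≤ vecNorm (Q i)) (hK : Disjoint K T) (hU : U ⊆ T)
    (hcard : K.card = U.card) : frobNorm (rowRestrict K Q) ≤ frobNorm (rowRestrict U Q) := by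
  rw [← pow_le_pow_iff_left₀ (frobNorm_nonneg _) (frobNorm_nonneg _) two_ne_zero,
    frobNorm_sq_rowRestrict, frobNorm_sq_rowRestrict]
  refine Finset.sum_le_sum_of_card_eq_of_forall_le _ hcard fun i hi j hj => ?_
  exact pow_le_pow_left₀ (vecNorm_nonneg _)
    (hQ i (hU hi) j (Finset.disjoint_left.mp hK hj)) 2

end RowRestrict

lemma le_sqrt_mul_of_sq_le_mul_sq {x y c : ℝ} (hx : 0 ≤ x) (hy : 0 ≤ y)
    (h : x ^ 2 ≤ c * y ^ 2) : x ≤ Real.sqrt c * y := by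
  have := Real.abs_le_sqrt h
  rwa [abs_of_nonneg hx, Real.sqrt_mul' c (sq_nonneg y), Real.sqrt_sq hy] at this

section KernelProjection

variable {m n : Type*} [Fintype m] [Fintype n] [DecidableEq m] [DecidableEq n]

noncomputable def kerProj (Φ : Matrix m n ℂ) : Matrix n n ℂ := 1 - Φᴴ * (Φ * Φᴴ)⁻¹ * Φ

/-- The orthogonal projection of `W` onto the affine space `{Z | Φ * Z = Y}` (the paper's `X̃`). -/
noncomputable def backproj {l : Type*} (Φ : Matrix m n ℂ) (W : Matrix n l ℂ) (Y : Matrix m l ℂ) :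
    Matrix n l ℂ :=
  W + Φᴴ * ((Φ * Φᴴ)⁻¹ * (Y - Φ * W))

lemma backproj_sub_eq {l : Type*} (Φ : Matrix m n ℂ) (X W : Matrix n l ℂ) (E : Matrix m l ℂ) :
    backproj Φ W (Φ * X + E) - X = Φᴴ * ((Φ * Φᴴ)⁻¹ * E) - kerProj Φ * (X - W) := by
  simp only [backproj, kerProj, Matrix.sub_mul, Matrix.mul_sub, Matrix.mul_add, Matrix.one_mul,
    Matrix.mul_assoc]
  abel

lemma conjTranspose_kerProj (Φ : Matrix m n ℂ) : (kerProj Φ)ᴴ = kerProj Φ := by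
  rw [kerProj, conjTranspose_sub, conjTranspose_one, conjTranspose_mul, conjTranspose_mul,
    (isHermitian_mul_conjTranspose_self Φ).inv.eq, conjTranspose_conjTranspose, Matrix.mul_assoc]

lemma conjTranspose_kerProj_mul_self {Φ : Matrix m n ℂ} (hinv : IsUnit (Φ * Φᴴ)) :
    (kerProj Φ)ᴴ * kerProj Φ = kerProj Φ := by
  have hH : (Φ * Φᴴ)⁻¹ * (Φ * Φᴴ) = 1 := nonsing_inv_mul _ ((isUnit_iff_isUnit_det _).mp hinv)
  have hP : Φᴴ * (Φ * Φᴴ)⁻¹ * Φ * (Φᴴ * (Φ * Φᴴ)⁻¹ * Φ) = Φᴴ * (Φ * Φᴴ)⁻¹ * Φ := by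
    calc Φᴴ * (Φ * Φᴴ)⁻¹ * Φ * (Φᴴ * (Φ * Φᴴ)⁻¹ * Φ)
        = Φᴴ * ((Φ * Φᴴ)⁻¹ * (Φ * Φᴴ)) * (Φ * Φᴴ)⁻¹ * Φ := by simp only [Matrix.mul_assoc]
      _ = Φᴴ * (Φ * Φᴴ)⁻¹ * Φ := by rw [hH, Matrix.mul_one]
  rw [conjTranspose_kerProj, kerProj, Matrix.sub_mul, Matrix.mul_sub, Matrix.mul_sub, hP,
    Matrix.one_mul, Matrix.mul_one, Matrix.one_mul, sub_self, sub_zero]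

end KernelProjection

section RestrictedIsometry

variable {M N L : ℕ} {Φ : Matrix (Fin M) (Fin N) ℂ}

lemma IsPRIC.frobNorm_kerProj_mul_sq_le {r : ℕ} {γ : ℝ} (hPRIC : IsPRIC L Φ r γ)
    (hinv : IsUnit (Φ * Φᴴ)) {A : Matrix (Fin N) (Fin L) ℂ} (hA : (rowSupp A).card ≤ r) :
    frobNorm (kerProj Φ * A) ^ 2 ≤ γ * frobNorm A ^ 2 := by
  have hsq : frobNorm (kerProj Φ * A) ^ 2 =
      frobNorm A ^ 2 - (trace ((Φ * A)ᴴ * ((Φ * Φᴴ)⁻¹ * (Φ * A)))).re := by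
    rw [frobNorm_sq_eq_re_trace, frobNorm_sq_eq_re_trace, conjTranspose_mul, Matrix.mul_assoc,
      ← Matrix.mul_assoc (kerProj Φ)ᴴ, conjTranspose_kerProj_mul_self hinv, kerProj,
      Matrix.sub_mul, Matrix.mul_sub, trace_sub, Complex.sub_re, conjTranspose_mul]
    simp only [Matrix.mul_assoc, Matrix.one_mul]
  linarith [hPRIC A hA]

lemma IsPRIC.neg_mul_le_re_trace_kerProj {r : ℕ} {γ : ℝ} (hPRIC : IsPRIC L Φ r γ)
    (hinv : IsUnit (Φ * Φᴴ)) (hγ : 0 ≤ γ) {Z V : Matrix (Fin N) (Fin L) ℂ}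
    (hZ : (rowSupp Z).card ≤ r) (hV : (rowSupp V).card ≤ r) :
    -(γ * frobNorm Z * frobNorm V) ≤ (trace (Zᴴ * (kerProj Φ * V))).re := by
  have hGZ := le_sqrt_mul_of_sq_le_mul_sq (frobNorm_nonneg _) (frobNorm_nonneg _)
    (hPRIC.frobNorm_kerProj_mul_sq_le hinv hZ)
  have hGV := le_sqrt_mul_of_sq_le_mul_sq (frobNorm_nonneg _) (frobNorm_nonneg _)
    (hPRIC.frobNorm_kerProj_mul_sq_le hinv hV)
  have hsym : Zᴴ * (kerProj Φ * V) = (kerProj Φ * Z)ᴴ * (kerProj Φ * V) := by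
    rw [conjTranspose_mul, Matrix.mul_assoc, ← Matrix.mul_assoc (kerProj Φ)ᴴ,
      conjTranspose_kerProj_mul_self hinv]
  rw [hsym, neg_le]
  calc -(trace ((kerProj Φ * Z)ᴴ * (kerProj Φ * V))).re
      ≤ frobNorm (kerProj Φ * Z) * frobNorm (kerProj Φ * V) :=
        (neg_le_abs _).trans (abs_re_trace_le_frobNorm_mul _ _)
    _ ≤ (Real.sqrt γ * frobNorm Z) * (Real.sqrt γ * frobNorm V) :=
        mul_le_mul hGZ hGV (frobNorm_nonneg _) (mul_nonneg (Real.sqrt_nonneg _) (frobNorm_nonneg _))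
    _ = γ * frobNorm Z * frobNorm V := by
        rw [mul_mul_mul_comm, Real.mul_self_sqrt hγ, mul_assoc]

lemma IsUpperRIC.re_trace_le {r : ℕ} {θ : ℝ} (hURIC : IsUpperRIC L ((Φ * Φᴴ)⁻¹ * Φ) r θ)
    {Z : Matrix (Fin N) (Fin L) ℂ} (hZ : (rowSupp Z).card ≤ r) (E : Matrix (Fin M) (Fin L) ℂ) :
    (trace (Zᴴ * (Φᴴ * ((Φ * Φᴴ)⁻¹ * E)))).re ≤ Real.sqrt (1 + θ) * frobNorm Z * frobNorm E := by
  have hAZ := le_sqrt_mul_of_sq_le_mul_sq (frobNorm_nonneg _) (frobNorm_nonneg _) (hURIC Z hZ)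
  have hsym : Zᴴ * (Φᴴ * ((Φ * Φᴴ)⁻¹ * E)) = ((Φ * Φᴴ)⁻¹ * Φ * Z)ᴴ * E := by
    rw [conjTranspose_mul, conjTranspose_mul, (isHermitian_mul_conjTranspose_self Φ).inv.eq]
    simp only [Matrix.mul_assoc]
  rw [hsym]
  exact (le_abs_self _).trans ((abs_re_trace_le_frobNorm_mul _ _).trans
    (mul_le_mul_of_nonneg_right hAZ (frobNorm_nonneg E)))

lemma frobNorm_rowRestrict_backproj_sub_le {r r' : ℕ} {γ θ : ℝ} (hinv : IsUnit (Φ * Φᴴ))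
    (hγ : 0 ≤ γ) (hPRIC : IsPRIC L Φ r γ) (hURIC : IsUpperRIC L ((Φ * Φᴴ)⁻¹ * Φ) r' θ)
    {U : Finset (Fin N)} (hUr : U.card ≤ r) (hUr' : U.card ≤ r') {X W : Matrix (Fin N) (Fin L) ℂ}
    (hXW : (rowSupp (X - W)).card ≤ r) (E : Matrix (Fin M) (Fin L) ℂ) :
    frobNorm (rowRestrict U (backproj Φ W (Φ * X + E) - X)) ≤
      γ * frobNorm (X - W) + Real.sqrt (1 + θ) * frobNorm E := by
  set Z := rowRestrict U (backproj Φ W (Φ * X + E) - X)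
  have hZ (k : ℕ) (hk : U.card ≤ k) : (rowSupp Z).card ≤ k :=
    (Finset.card_le_card (rowSupp_rowRestrict_subset _ _)).trans hk
  have hsq : frobNorm Z ^ 2 =
      (trace (Zᴴ * (backproj Φ W (Φ * X + E) - X))).re := by
    rw [conjTranspose_rowRestrict_mul_self, frobNorm_sq_eq_re_trace]
  rw [backproj_sub_eq, Matrix.mul_sub, trace_sub, Complex.sub_re] at hsq
  have hbound : frobNorm Z ^ 2 ≤
      (γ * frobNorm (X - W) + Real.sqrt (1 + θ) * frobNorm E) * frobNorm Z := by
    linarith [hURIC.re_trace_le (hZ r' hUr') E,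
      hPRIC.neg_mul_le_re_trace_kerProj hinv hγ (hZ r hUr) hXW]
  have hrhs : 0 ≤ γ * frobNorm (X - W) + Real.sqrt (1 + θ) * frobNorm E :=
    add_nonneg (mul_nonneg hγ (frobNorm_nonneg _))
      (mul_nonneg (Real.sqrt_nonneg _) (frobNorm_nonneg _))
  nlinarith [frobNorm_nonneg Z]

end RestrictedIsometry

section Selection

variable {N L : ℕ}

lemma frobNorm_rowRestrict_mul_le {Q : Matrix (Fin N) (Fin L) ℂ} {R : Matrix (Fin L) (Fin L) ℂ}
    {T K U : Finset (Fin N)} {α : ℝ} (hQ : ∀ i ∈ T, ∀ j ∉ T, vecNorm (Q j) ≤ vecNorm (Q i))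
    (hR : IsUnit R) (hα : 0 ≤ α) (hσ : sigmaMax R ≤ α * sigmaMin R) (hK : Disjoint K T)
    (hU : U ⊆ T) (hcard : K.card = U.card) :
    frobNorm (rowRestrict K (Q * R)) ≤ α * frobNorm (rowRestrict U (Q * R)) := by
  rw [rowRestrict_mul, rowRestrict_mul]
  calc frobNorm (rowRestrict K Q * R) ≤ sigmaMax R * frobNorm (rowRestrict K Q) :=
        frobNorm_mul_le_sigmaMax_mul _ R
    _ ≤ α * sigmaMin R * frobNorm (rowRestrict U Q) :=
        mul_le_mul hσ (frobNorm_rowRestrict_le_of_forall_le hQ hK hU hcard) (frobNorm_nonneg _)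
          (mul_nonneg hα (sigmaMin_nonneg R))
    _ ≤ α * frobNorm (rowRestrict U Q * R) := by
        rw [mul_assoc]
        exact mul_le_mul_of_nonneg_left (sigmaMin_mul_frobNorm_le _ hR) hα

lemma frobNorm_rowRestrict_le_of_selection {X Xt : Matrix (Fin N) (Fin L) ℂ}
    {K U : Finset (Fin N)} {α : ℝ} (hUK : Disjoint U K) (hX : rowRestrict U X = 0) (hα : 1 ≤ α)
    (hsel : frobNorm (rowRestrict K Xt) ≤ α * frobNorm (rowRestrict U Xt)) :
    frobNorm (rowRestrict K X) ≤ Real.sqrt 2 * α * frobNorm (rowRestrict (U ∪ K) (Xt - X)) := by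
  have hXt : rowRestrict U Xt = rowRestrict U (Xt - X) := by
    rw [rowRestrict_sub, hX, sub_zero]
  have hK : rowRestrict K X = rowRestrict K Xt - rowRestrict K (Xt - X) := by
    rw [rowRestrict_sub, sub_sub_cancel]
  have hD := frobNorm_nonneg (rowRestrict K (Xt - X))
  calc frobNorm (rowRestrict K X)
      ≤ frobNorm (rowRestrict K Xt) + frobNorm (rowRestrict K (Xt - X)) :=
        hK ▸ frobNorm_sub_le _ _
    _ ≤ α * (frobNorm (rowRestrict U (Xt - X)) + frobNorm (rowRestrict K (Xt - X))) := by
        rw [← hXt]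
        nlinarith
    _ ≤ α * (Real.sqrt 2 * frobNorm (rowRestrict (U ∪ K) (Xt - X))) :=
        mul_le_mul_of_nonneg_left (frobNorm_rowRestrict_add_le_sqrt_two_mul hUK _) (by linarith)
    _ = Real.sqrt 2 * α * frobNorm (rowRestrict (U ∪ K) (Xt - X)) := by ring

end Selection

theorem stmt7_general {M N L s s' t : ℕ} (Φ : Matrix (Fin M) (Fin N) ℂ) (hinv : IsUnit (Φ * Φᴴ))
    (X W' : Matrix (Fin N) (Fin L) ℂ) (E : Matrix (Fin M) (Fin L) ℂ)
    (Y : Matrix (Fin M) (Fin L) ℂ) (hY : Y = Φ * X + E)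
    (hXs : (rowSupp X).card ≤ s) (hWs : (rowSupp W').card ≤ s')
    (Xt : Matrix (Fin N) (Fin L) ℂ) (hXt : Xt = W' + Φᴴ * ((Φ * Φᴴ)⁻¹ * (Y - Φ * W')))
    (Q : Matrix (Fin N) (Fin L) ℂ) (R : Matrix (Fin L) (Fin L) ℂ)
    (hR : IsUnit R) (hQR : Xt = Q * R)
    (α : ℝ) (hα : 1 ≤ α) (hσ : sigmaMax R ≤ α * sigmaMin R)
    (T : Finset (Fin N)) (hTcard : T.card = t) (hts : s ≤ t)
    (hT : ∀ i ∈ T, ∀ j ∉ T, vecNorm (Q j) ≤ vecNorm (Q i))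
    (γ θ : ℝ) (hγ : 0 ≤ γ)
    (hPRIC : IsPRIC L Φ (s + s' + t) γ)
    (hURIC : IsUpperRIC L ((Φ * Φᴴ)⁻¹ * Φ) (t + s) θ) :
    frobNorm (rowRestrict Tᶜ X) ≤
      Real.sqrt 2 * α * (γ * frobNorm (X - W') + Real.sqrt (1 + θ) * frobNorm E) := by
  have hXW : (rowSupp (X - W')).card ≤ s + s' + t :=
    (Finset.card_le_card (rowSupp_sub_subset X W')).trans
      ((Finset.card_union_le _ _).trans (by omega))
  set S := rowSupp X
  -- `U` takes the place of the missed support `S \ T` inside `T`, where `X` vanishes.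
  obtain ⟨U, hUsub, hUcard⟩ := Finset.exists_subset_card_eq
    (Finset.card_sdiff_le_card_sdiff_iff.mpr (hXs.trans (hTcard ▸ hts)))
  have hUT : U ⊆ T := hUsub.trans Finset.sdiff_subset
  have hsel := frobNorm_rowRestrict_mul_le hT hR (by linarith) hσ Finset.sdiff_disjoint hUT
    hUcard.symm
  rw [← hQR] at hsel
  have htail := frobNorm_rowRestrict_le_of_selection
    (Finset.disjoint_of_subset_left hUT Finset.disjoint_sdiff)
    (rowRestrict_eq_zero_of_disjoint (Finset.disjoint_of_subset_left hUsub Finset.sdiff_disjoint))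
    hα hsel
  have hcardUS : (U ∪ (S \ T)).card ≤ t + s :=
    (Finset.card_union_le _ _).trans <| add_le_add (hTcard ▸ Finset.card_le_card hUT)
      ((Finset.card_le_card Finset.sdiff_subset).trans hXs)
  have herr := frobNorm_rowRestrict_backproj_sub_le hinv hγ hPRIC hURIC (by omega) hcardUS hXW E
  rw [show backproj Φ W' (Φ * X + E) = Xt by rw [hXt, hY]; rfl] at herr
  calc frobNorm (rowRestrict Tᶜ X) = frobNorm (rowRestrict (S \ T) X) := by
        rw [Finset.sdiff_eq_inter_compl, rowRestrict_rowSupp_inter]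
    _ ≤ _ := htail.trans (mul_le_mul_of_nonneg_left herr (by positivity))

/-- Lemma 7 of the paper (tail bound after index selection). -/
theorem stmt7 {M N L s s' t : ℕ} (Φ : Matrix (Fin M) (Fin N) ℂ) (hinv : IsUnit (Φ * Φᴴ))
    (X W' : Matrix (Fin N) (Fin L) ℂ) (E : Matrix (Fin M) (Fin L) ℂ)
    (Y : Matrix (Fin M) (Fin L) ℂ) (hY : Y = Φ * X + E)
    (hXs : (rowSupp X).card ≤ s) (hWs : (rowSupp W').card ≤ s')
    (Xt : Matrix (Fin N) (Fin L) ℂ) (hXt : Xt = W' + Φᴴ * ((Φ * Φᴴ)⁻¹ * (Y - Φ * W')))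
    (Q : Matrix (Fin N) (Fin L) ℂ) (R : Matrix (Fin L) (Fin L) ℂ)
    (hQ : Qᴴ * Q = 1) (hR : IsUnit R) (hQR : Xt = Q * R)
    (α : ℝ) (hα : 1 ≤ α) (hσ : sigmaMax R ≤ α * sigmaMin R)
    (T : Finset (Fin N)) (hTcard : T.card = t) (hts : s ≤ t)
    (hT : ∀ i ∈ T, ∀ j ∉ T, vecNorm (Q j) ≤ vecNorm (Q i))
    (γ θ : ℝ) (hγ : 0 ≤ γ) (hθ : 0 ≤ θ)
    (hPRIC : IsPRIC L Φ (s + s' + t) γ)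
    (hURIC : IsUpperRIC L ((Φ * Φᴴ)⁻¹ * Φ) (t + s) θ) :
    frobNorm (rowRestrict Tᶜ X) ≤
      Real.sqrt 2 * α * (γ * frobNorm (X - W') + Real.sqrt (1 + θ) * frobNorm E) :=
  stmt7_general Φ hinv X W' E Y hY hXs hWs Xt hXt Q R hR hQR α hα hσ T hTcard hts hT γ θ hγ hPRIC
    hURIC
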